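/- If C is a circuit all of whose channels are constant-delay channels, then for every assignment of signals to the input ports of C there exists a unique execution of C extending this assignment. -/

import Mathlib

/-- A (binary, continuous-time) signal: it attains its new value at each transition time
(right-local constancy) and changes value only finitely often in every bounded
interval. -/
def IsSignal (s : ℝ → Bool) : Prop :=
  (∀ t : ℝ, ∃ ε > 0, ∀ u : ℝ, t ≤ u → u < t + ε → s u = s t) ∧
  (∀ a b : ℝ, {t : ℝ | a ≤ t ∧ t ≤ b ∧
      ∀ ε > 0, ∃ u : ℝ, t - ε < u ∧ u < t ∧ s u ≠ s t}.Finite)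

/-- The constant-delay channel with delay `d` and initial value `x`. -/
noncomputable def delayChannel (d : ℝ) (x : Bool) (s : ℝ → Bool) : ℝ → Bool :=
  fun t => if t < d then x else s (t - d)

/-- A circuit: a finite directed graph with input ports (in-degree 0), output ports
(in-degree 1, computing the identity), and Boolean gates; `preds v` is the ordered list
of in-neighbors of `v`, and `chan v k` is the channel on the `k`-th incoming edge
of `v`. -/
structure Circuit where
  V : Type
  [instFintype : Fintype V]
  [instDecEq : DecidableEq V]
  inp : V → Prop
  out : V → Prop
  preds : V → List V
  gate : V → List Bool → Bool
  chan : V → ℕ → (ℝ → Bool) → ℝ → Bool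
  inp_preds : ∀ v, inp v → preds v = []
  out_preds : ∀ v, out v → (preds v).length = 1
  out_gate : ∀ v, out v → ∀ l : List Bool, gate v l = l.headI
  inp_not_out : ∀ v, ¬ (inp v ∧ out v)

/-- An execution of a circuit: an assignment of a signal to every vertex such that every
non-input vertex computes its Boolean function of its channel-delayed inputs. -/
def Execution (C : Circuit) (s : C.V → ℝ → Bool) : Prop :=
  (∀ v, IsSignal (s v)) ∧
  ∀ v, ¬ C.inp v → ∀ t : ℝ,
    s v t = C.gate v (((C.preds v).zipIdx).map fun p => C.chan v p.2 (s p.1) t)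

/-! ### Auxiliary material -/

lemma cdue_foldr_pos : ∀ (l : List ℝ), (∀ x ∈ l, 0 < x) → 0 < l.foldr min 1 := by
  intro l
  induction l with
  | nil => intro _; exact one_pos
  | cons a l IH =>
    intro h
    exact lt_min (h a (List.mem_cons_self)) (IH fun x hx => h x (List.mem_cons_of_mem a hx))

lemma cdue_foldr_le : ∀ (l : List ℝ) (x : ℝ), x ∈ l → l.foldr min 1 ≤ x := by
  intro l
  induction l with
  | nil => intro x hx; simp at hx
  | cons a l IH =>
    intro x hx
    rcases List.mem_cons.1 hx with rfl | hx
    · exact min_le_left _ _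
    · exact (min_le_right _ _).trans (IH x hx)

lemma cdue_list_eps {α : Type*} (L : List α) (P : α → ℝ → Prop)
    (hm : ∀ x ε ε', 0 < ε' → ε' ≤ ε → P x ε → P x ε')
    (h : ∀ x ∈ L, ∃ ε > 0, P x ε) : ∃ ε > 0, ∀ x ∈ L, P x ε := by
  induction L with
  | nil => exact ⟨1, one_pos, by simp⟩
  | cons y L IH =>
    obtain ⟨ε₁, hε₁, h₁⟩ := h y (List.mem_cons_self)
    obtain ⟨ε₂, hε₂, h₂⟩ := IH (fun x hx => h x (List.mem_cons_of_mem y hx))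
    refine ⟨min ε₁ ε₂, lt_min hε₁ hε₂, ?_⟩
    intro x hx
    rcases List.mem_cons.1 hx with rfl | hx
    · exact hm x ε₁ _ (lt_min hε₁ hε₂) (min_le_left _ _) h₁
    · exact hm x ε₂ _ (lt_min hε₁ hε₂) (min_le_right _ _) (h₂ x hx)

/-- The set of "left transition points" of `s` in `[a,b]`. -/
def cdBadSet (s : ℝ → Bool) (a b : ℝ) : Set ℝ :=
  {t : ℝ | a ≤ t ∧ t ≤ b ∧ ∀ ε > 0, ∃ u : ℝ, t - ε < u ∧ u < t ∧ s u ≠ s t}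

lemma cdue_badSet_delay (d : ℝ) (x : Bool) (s : ℝ → Bool) (a b : ℝ) :
    cdBadSet (delayChannel d x s) a b ⊆
      ((fun u => u + d) '' cdBadSet s (a - d) (b - d)) ∪ {d} := by
  rintro t ⟨ha, hb, hbad⟩
  rcases lt_trichotomy t d with h | h | h
  · exfalso
    obtain ⟨u, hu1, hu2, hu3⟩ := hbad (d - t) (by linarith)
    apply hu3
    have hud : u < d := by linarith
    simp [delayChannel, hud, h]
  · exact Or.inr (by simp [h])
  · refine Or.inl ⟨t - d, ⟨by linarith, by linarith, ?_⟩, by ring⟩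
    intro ε hε
    obtain ⟨u, hu1, hu2, hu3⟩ := hbad (min ε (t - d)) (lt_min hε (by linarith))
    have hud : d < u := by
      have := min_le_right ε (t - d); linarith
    refine ⟨u - d, by have := min_le_left ε (t - d); linarith, by linarith, ?_⟩
    intro hc
    apply hu3
    simpa [delayChannel, if_neg (not_lt.2 hud.le), if_neg (not_lt.2 h.le)] using hc
  
lemma cdue_badSet_gate (G : List Bool → Bool) (L : List (ℝ → Bool)) (a b : ℝ) :
    cdBadSet (fun t => G (L.map fun ℓ => ℓ t)) a b ⊆ ⋃ ℓ ∈ L, cdBadSet ℓ a b := by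
  rintro t ⟨ha, hb, hbad⟩
  by_contra hnot
  simp only [Set.mem_iUnion, not_exists] at hnot
  have h1 : ∀ ℓ ∈ L, ∃ ε > 0, ∀ u, t - ε < u → u < t → ℓ u = ℓ t := by
    intro ℓ hl
    have h2 : t ∉ cdBadSet ℓ a b := fun hmem => hnot ℓ hl hmem
    simp only [cdBadSet, Set.mem_setOf_eq, not_and] at h2
    have h3 := h2 ha hb
    push_neg at h3
    obtain ⟨ε, hε, h4⟩ := h3
    exact ⟨ε, hε, fun u hu1 hu2 => h4 u hu1 hu2⟩
  obtain ⟨ε, hε, hP⟩ := cdue_list_eps L (fun ℓ ε => ∀ u, t - ε < u → u < t → ℓ u = ℓ t)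
    (fun x ε ε' hε' hle hP u h1 h2 => hP u (by linarith) h2) h1
  obtain ⟨u, hu1, hu2, hu3⟩ := hbad ε hε
  exact hu3 (congrArg G (List.map_congr_left fun ℓ hl => hP ℓ hl u hu1 hu2))

open Classical in
/-- One synchronous update step of the circuit, with inputs clamped to `f`. -/
noncomputable def cdStep (C : Circuit) (f : C.V → ℝ → Bool)
    (σ : C.V → ℝ → Bool) : C.V → ℝ → Bool :=
  fun v t => if C.inp v then f v t else
    C.gate v (((C.preds v).zipIdx).map fun p => C.chan v p.2 (σ p.1) t)

/-- Iterates of the update step. -/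
noncomputable def cdG (C : Circuit) (f : C.V → ℝ → Bool) : ℕ → C.V → ℝ → Bool :=
  fun n => (cdStep C f)^[n] (fun _ _ => false)

lemma cdG_succ (C : Circuit) (f : C.V → ℝ → Bool) (n : ℕ) :
    cdG C f (n + 1) = cdStep C f (cdG C f n) :=
  Function.iterate_succ_apply' _ n _

/-- a circuit all of whose channels are constant-delay channels has, for
every assignment of signals to its input ports, a unique execution extending the
assignment. -/
theorem constant_delay_unique_execution
    (C : Circuit)
    (hchan : ∀ (v : C.V) (k : ℕ), k < (C.preds v).length →
      ∃ d : ℝ, 0 < d ∧ ∃ b : Bool, C.chan v k = delayChannel d b)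
    (f : C.V → ℝ → Bool) (hf : ∀ v, C.inp v → IsSignal (f v)) :
    ∃! s : C.V → ℝ → Bool, Execution C s ∧ ∀ v, C.inp v → s v = f v := by
  classical
  haveI := C.instFintype
  haveI := C.instDecEq
  -- choose delays and initial values for all channels
  have hchan' : ∀ (v : C.V) (k : ℕ), ∃ d : ℝ, ∃ b : Bool,
      0 < d ∧ (k < (C.preds v).length → C.chan v k = delayChannel d b) := by
    intro v k
    by_cases h : k < (C.preds v).length
    · obtain ⟨d, hd, b, hb⟩ := hchan v k h
      exact ⟨d, b, hd, fun _ => hb⟩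
    · exact ⟨1, false, one_pos, fun hk => absurd hk h⟩
  choose dl bt hdl hch using hchan'
  -- minimum delay
  set allD : List ℝ :=
    (Finset.univ : Finset C.V).toList.flatMap
      (fun v => (List.range (C.preds v).length).map (dl v)) with hallD
  set dmin : ℝ := allD.foldr min 1 with hdmin
  have hdmin_pos : 0 < dmin := by
    apply cdue_foldr_pos
    intro x hx
    rw [hallD] at hx
    simp only [List.mem_flatMap, List.mem_map, List.mem_range] at hx
    obtain ⟨v, _, k, _, rfl⟩ := hx
    exact hdl v k
  have hdmin_le : ∀ (v : C.V) (k : ℕ), k < (C.preds v).length → dmin ≤ dl v k := by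
    intro v k hk
    apply cdue_foldr_le
    rw [hallD]
    simp only [List.mem_flatMap, List.mem_map, List.mem_range]
    exact ⟨v, by simp, k, hk, rfl⟩
  -- key comparison lemma
  have hcomp : ∀ (σ₁ σ₂ : C.V → ℝ → Bool) (t : ℝ),
      (∀ w u, 0 ≤ u → u ≤ t - dmin → σ₁ w u = σ₂ w u) →
      ∀ v, cdStep C f σ₁ v t = cdStep C f σ₂ v t := by
    intro σ₁ σ₂ t H v
    by_cases hv : C.inp v
    · simp only [cdStep, if_pos hv]
    · simp only [cdStep, if_neg hv]
      congr 1
      refine List.map_congr_left ?_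
      rintro ⟨w, k⟩ hp
      have hk : k < (C.preds v).length := by simpa using List.snd_lt_of_mem_zipIdx hp
      rw [hch v k hk]
      simp only [delayChannel]
      by_cases ht : t < dl v k
      · rw [if_pos ht, if_pos ht]
      · rw [if_neg ht, if_neg ht]
        push_neg at ht
        exact H w (t - dl v k) (by linarith) (by have := hdmin_le v k hk; linarith)
  -- stabilization
  have S : ∀ (n : ℕ) (v : C.V) (t : ℝ), t < (n : ℝ) * dmin →
      cdG C f (n + 2) v t = cdG C f (n + 1) v t := by
    intro n
    induction n with
    | zero =>
      intro v t ht
      norm_num at ht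
      have e1 : cdG C f (0 + 2) = cdStep C f (cdG C f (0 + 1)) := cdG_succ C f (0 + 1)
      rw [e1]
      conv_rhs => rw [cdG_succ C f 0]
      exact hcomp _ _ t (fun w u h0 h1 => by linarith) v
    | succ n IH =>
      intro v t ht
      have e1 : cdG C f (n + 1 + 2) = cdStep C f (cdG C f (n + 2)) := cdG_succ C f (n + 2)
      have e2 : cdG C f (n + 1 + 1) = cdStep C f (cdG C f (n + 1)) := cdG_succ C f (n + 1)
      rw [e2, e1]
      refine hcomp _ _ t (fun w u h0 h1 => ?_) v
      apply IH
      push_cast at ht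
      have : ((n : ℝ) + 1) * dmin = (n : ℝ) * dmin + dmin := by ring
      linarith
  have S2 : ∀ (k n : ℕ) (v : C.V) (t : ℝ), t < (n : ℝ) * dmin →
      cdG C f (n + 1 + k) v t = cdG C f (n + 1) v t := by
    intro k
    induction k with
    | zero => intro n v t _; rfl
    | succ k IH =>
      intro n v t ht
      have h2 : t < ((n + k : ℕ) : ℝ) * dmin := by
        push_cast
        nlinarith [hdmin_pos, Nat.cast_nonneg (α := ℝ) k]
      calc cdG C f (n + 1 + (k + 1)) v t = cdG C f ((n + k) + 2) v t := by ring_nf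
        _ = cdG C f ((n + k) + 1) v t := S (n + k) v t h2
        _ = cdG C f (n + 1 + k) v t := by ring_nf
        _ = cdG C f (n + 1) v t := IH n v t ht
  set NN : ℝ → ℕ := fun t => ⌈t / dmin⌉₊ + 1 with hNN
  have hN : ∀ t : ℝ, t < (NN t : ℝ) * dmin := by
    intro t
    by_cases h : t ≤ 0
    · have h1 : (1 : ℝ) ≤ (NN t : ℝ) := by
        rw [hNN]; push_cast; linarith [Nat.cast_nonneg (α := ℝ) ⌈t / dmin⌉₊]
      nlinarith
    · push_neg at h
      have h1 : t / dmin ≤ (⌈t / dmin⌉₊ : ℝ) := Nat.le_ceil _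
      have h2 : t ≤ (⌈t / dmin⌉₊ : ℝ) * dmin := by
        rw [div_le_iff₀ hdmin_pos] at h1; linarith
      rw [hNN]; push_cast; nlinarith
  set sig : C.V → ℝ → Bool := fun v t => cdG C f (NN t + 1) v t with hsig
  have hsg : ∀ (n : ℕ) (v : C.V) (t : ℝ), t < (n : ℝ) * dmin →
      sig v t = cdG C f (n + 1) v t := by
    intro n v t ht
    have h1 := S2 (max (NN t) n - NN t) (NN t) v t (hN t)
    have h2 := S2 (max (NN t) n - n) n v t ht
    have e1 : NN t + 1 + (max (NN t) n - NN t) = max (NN t) n + 1 := by omega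
    have e2 : n + 1 + (max (NN t) n - n) = max (NN t) n + 1 := by omega
    rw [e1] at h1
    rw [e2] at h2
    rw [hsig]
    exact h1.symm.trans h2
  have hfix : ∀ (v : C.V) (t : ℝ), sig v t = cdStep C f sig v t := by
    intro v t
    have hlt : t < ((NN t + 1 : ℕ) : ℝ) * dmin := by
      have h2 : ((NN t + 1 : ℕ) : ℝ) = (NN t : ℝ) + 1 := by push_cast; ring
      rw [h2]; nlinarith [hN t, hdmin_pos]
    have h1 : sig v t = cdG C f (NN t + 2) v t := hsg (NN t + 1) v t hlt
    rw [h1, show NN t + 2 = (NN t + 1) + 1 from rfl, cdG_succ]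
    refine hcomp _ _ t (fun w u h0 h1 => ?_) v
    exact (hsg (NN t) w u (by linarith [hN t, hdmin_pos])).symm
  have hinp : ∀ v, C.inp v → sig v = f v := by
    intro v hv
    funext t
    rw [hfix v t]
    simp only [cdStep, if_pos hv]
  have hexec : ∀ v, ¬ C.inp v → ∀ t : ℝ,
      sig v t = C.gate v (((C.preds v).zipIdx).map fun p => C.chan v p.2 (sig p.1) t) := by
    intro v hv t
    rw [hfix v t]
    simp only [cdStep, if_neg hv]
  -- right-local constancy
  have RC : ∀ (n : ℕ) (v : C.V) (t : ℝ), t < (n : ℝ) * dmin →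
      ∃ ε > 0, ∀ u : ℝ, t ≤ u → u < t + ε → sig v u = sig v t := by
    intro n
    induction n with
    | zero =>
      intro v t ht
      norm_num at ht
      by_cases hv : C.inp v
      · rw [hinp v hv]; exact (hf v hv).1 t
      · have hEach : ∀ p ∈ (C.preds v).zipIdx, ∃ ε > 0, ∀ u : ℝ, t ≤ u → u < t + ε →
            C.chan v p.2 (sig p.1) u = C.chan v p.2 (sig p.1) t := by
          rintro ⟨w, k⟩ hp
          have hk : k < (C.preds v).length := by simpa using List.snd_lt_of_mem_zipIdx hp
          refine ⟨dl v k - t, by linarith [hdl v k], fun u hu1 hu2 => ?_⟩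
          rw [hch v k hk]
          simp only [delayChannel]
          rw [if_pos (by linarith : u < dl v k), if_pos (by linarith [hdl v k] : t < dl v k)]
        obtain ⟨ε, hε, hP⟩ := cdue_list_eps ((C.preds v).zipIdx)
          (fun p ε => ∀ u : ℝ, t ≤ u → u < t + ε →
            C.chan v p.2 (sig p.1) u = C.chan v p.2 (sig p.1) t)
          (fun x ε ε' hε' hle hP u h1 h2 => hP u h1 (by linarith)) hEach
        refine ⟨ε, hε, fun u hu1 hu2 => ?_⟩
        rw [hexec v hv u, hexec v hv t]
        congr 1
        exact List.map_congr_left fun p hp => hP p hp u hu1 hu2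
    | succ n IH =>
      intro v t ht
      by_cases hv : C.inp v
      · rw [hinp v hv]; exact (hf v hv).1 t
      · have hEach : ∀ p ∈ (C.preds v).zipIdx, ∃ ε > 0, ∀ u : ℝ, t ≤ u → u < t + ε →
            C.chan v p.2 (sig p.1) u = C.chan v p.2 (sig p.1) t := by
          rintro ⟨w, k⟩ hp
          have hk : k < (C.preds v).length := by simpa using List.snd_lt_of_mem_zipIdx hp
          rw [hch v k hk]
          by_cases hd : t < dl v k
          · refine ⟨dl v k - t, by linarith, fun u hu1 hu2 => ?_⟩
            simp only [delayChannel]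
            rw [if_pos (by linarith : u < dl v k), if_pos hd]
          · push_neg at hd
            have hb : t - dl v k < (n : ℝ) * dmin := by
              have := hdmin_le v k hk
              push_cast at ht
              have h3 : ((n : ℝ) + 1) * dmin = (n : ℝ) * dmin + dmin := by ring
              linarith
            obtain ⟨ε, hε, hc⟩ := IH w (t - dl v k) hb
            refine ⟨ε, hε, fun u hu1 hu2 => ?_⟩
            simp only [delayChannel]
            rw [if_neg (by linarith : ¬ u < dl v k), if_neg (by linarith : ¬ t < dl v k)]
            exact hc (u - dl v k) (by linarith) (by linarith)
        obtain ⟨ε, hε, hP⟩ := cdue_list_eps ((C.preds v).zipIdx)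
          (fun p ε => ∀ u : ℝ, t ≤ u → u < t + ε →
            C.chan v p.2 (sig p.1) u = C.chan v p.2 (sig p.1) t)
          (fun x ε ε' hε' hle hP u h1 h2 => hP u h1 (by linarith)) hEach
        refine ⟨ε, hε, fun u hu1 hu2 => ?_⟩
        rw [hexec v hv u, hexec v hv t]
        congr 1
        exact List.map_congr_left fun p hp => hP p hp u hu1 hu2
  -- finiteness of transition sets
  have BF : ∀ (n : ℕ) (v : C.V) (a b : ℝ), b < (n : ℝ) * dmin →
      (cdBadSet (sig v) a b).Finite := by
    intro n
    induction n with
    | zero =>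
      intro v a b hb
      norm_num at hb
      by_cases hv : C.inp v
      · rw [hinp v hv]; exact (hf v hv).2 a b
      · apply Set.Finite.subset Set.finite_empty
        rintro t ⟨h1, h2, h3⟩
        obtain ⟨u, hu1, hu2, hu3⟩ := h3 1 one_pos
        exfalso
        apply hu3
        have hconst : ∀ x : ℝ, x < 0 →
            sig v x = C.gate v (((C.preds v).zipIdx).map fun p => bt v p.2) := by
          intro x hx
          rw [hexec v hv x]
          congr 1
          refine List.map_congr_left ?_
          rintro ⟨w, k⟩ hp
          have hk : k < (C.preds v).length := by simpa using List.snd_lt_of_mem_zipIdx hp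
          rw [hch v k hk]
          simp only [delayChannel]
          rw [if_pos (by linarith [hdl v k] : x < dl v k)]
        rw [hconst u (by linarith), hconst t (by linarith)]
    | succ n IH =>
      intro v a b hb
      by_cases hv : C.inp v
      · rw [hinp v hv]; exact (hf v hv).2 a b
      · have hrw : sig v = fun t => C.gate v
            ((((C.preds v).zipIdx).map fun p => C.chan v p.2 (sig p.1)).map fun ℓ => ℓ t) := by
          funext t
          rw [hexec v hv t, List.map_map]
          rfl
        rw [hrw]
        apply Set.Finite.subset ?_ (cdue_badSet_gate (C.gate v) _ a b)
        apply Set.Finite.biUnion (((C.preds v).zipIdx.map fun p => C.chan v p.2 (sig p.1)).finite_toSet)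
        intro ℓ hl
        simp only [List.mem_map] at hl
        obtain ⟨p, hp, rfl⟩ := hl
        have hk : p.2 < (C.preds v).length := by simpa using List.snd_lt_of_mem_zipIdx hp
        rw [hch v p.2 hk]
        apply Set.Finite.subset ?_ (cdue_badSet_delay (dl v p.2) (bt v p.2) (sig p.1) a b)
        apply Set.Finite.union
        · apply Set.Finite.image
          apply IH p.1 (a - dl v p.2) (b - dl v p.2)
          have := hdmin_le v p.2 hk
          push_cast at hb
          have h3 : ((n : ℝ) + 1) * dmin = (n : ℝ) * dmin + dmin := by ring
          linarith
        · exact Set.finite_singleton _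
  refine ⟨sig, ⟨⟨fun v => ⟨fun t => RC (NN t) v t (hN t), fun a b => BF (NN b) v a b (hN b)⟩,
    hexec⟩, hinp⟩, ?_⟩
  -- uniqueness
  rintro s' ⟨⟨hsig', hex'⟩, hin'⟩
  have hfix' : ∀ (v : C.V) (t : ℝ), s' v t = cdStep C f s' v t := by
    intro v t
    by_cases hv : C.inp v
    · simp only [cdStep, if_pos hv]
      exact congrFun (hin' v hv) t
    · simp only [cdStep, if_neg hv]
      exact hex' v hv t
  have P : ∀ (n : ℕ) (v : C.V) (t : ℝ), t < (n : ℝ) * dmin → s' v t = sig v t := by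
    intro n
    induction n with
    | zero =>
      intro v t ht
      norm_num at ht
      rw [hfix' v t, hfix v t]
      exact hcomp _ _ t (fun w u h0 h1 => by linarith [hdmin_pos]) v
    | succ n IH =>
      intro v t ht
      rw [hfix' v t, hfix v t]
      refine hcomp _ _ t (fun w u h0 h1 => ?_) v
      apply IH
      push_cast at ht
      have h3 : ((n : ℝ) + 1) * dmin = (n : ℝ) * dmin + dmin := by ring
      linarith
  funext v t
  exact P (NN t) v t (hN t)
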